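/- For $|q| < 1$, $|x| < 1$, $|y| < 1$: $\frac{(xy;q)_\infty}{(x;q)_\infty (y;q)_\infty} = \sum_{r,s \geq 0} \frac{q^{rs} x^r y^s}{(q;q)_r (q;q)_s}$. -/

import Mathlib

/-! The series `S(x) = ∑ (a;q)_n / (q;q)_n x^n` satisfies `(1 - x) S(x) = (1 - a x) S(q x)`,
because `(q;q)_n` and `(a;q)_n` gain the factors `1 - q^n` and `1 - a q^(n-1)` at step `n`.
Iterating `N` times and letting `q^N x → 0` gives the `q`-binomial theorem
`S(x) = (a x;q)_∞ / (x;q)_∞`. In the double series, summing over `s` first is Euler's case `a = 0`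
at `q^r y`, which gives `(y;q)_r / (y;q)_∞`; the remaining sum over `r` is `S(x)` with `a = y`. -/

open Finset Filter Topology

/-- `(q;q)_n = ∏_{i=1}^n (1 - q^i)`. -/
noncomputable def qPochN (q : ℂ) (n : ℕ) : ℂ :=
  ∏ i ∈ Finset.range n, (1 - q ^ (i + 1))

/-- `(a;q)_n`. -/
noncomputable def qPoch (a q : ℂ) (n : ℕ) : ℂ :=
  ∏ i ∈ range n, (1 - a * q ^ i)

noncomputable def qBinomialSeries (a q x : ℂ) : ℂ :=
  ∑' n, qPoch a q n / qPochN q n * x ^ n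

variable {q : ℂ}

lemma qPochN_eq_qPoch (q : ℂ) (n : ℕ) : qPochN q n = qPoch q q n := by
  simp only [qPochN, qPoch, pow_succ']

lemma qPoch_succ (a q : ℂ) (n : ℕ) : qPoch a q (n + 1) = qPoch a q n * (1 - a * q ^ n) :=
  prod_range_succ _ n

lemma qPoch_zero_left (q : ℂ) (n : ℕ) : qPoch 0 q n = 1 := by
  simp [qPoch]

lemma one_sub_ne_zero_of_norm_lt_one {z : ℂ} (hz : ‖z‖ < 1) : 1 - z ≠ 0 :=
  sub_ne_zero.2 <| ne_of_apply_ne norm <| by simpa using hz.ne'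

lemma norm_mul_pow_lt_one {a : ℂ} (ha : ‖a‖ < 1) (hq : ‖q‖ ≤ 1) (i : ℕ) : ‖a * q ^ i‖ < 1 := by
  rw [norm_mul, norm_pow]
  exact mul_lt_one_of_nonneg_of_lt_one_left (norm_nonneg a) ha (pow_le_one₀ (norm_nonneg q) hq)

lemma norm_pow_mul_lt_one (hq : ‖q‖ ≤ 1) {x : ℂ} (hx : ‖x‖ < 1) (N : ℕ) : ‖q ^ N * x‖ < 1 := by
  simpa [mul_comm] using norm_mul_pow_lt_one hx hq N

lemma summable_norm_mul_pow (a : ℂ) (hq : ‖q‖ < 1) : Summable fun i : ℕ => ‖a * q ^ i‖ := by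
  simpa [norm_mul, norm_pow] using
    (summable_geometric_of_lt_one (norm_nonneg q) hq).mul_left ‖a‖

lemma multipliable_one_sub_mul_pow (a : ℂ) (hq : ‖q‖ < 1) :
    Multipliable fun i : ℕ => 1 - a * q ^ i := by
  simpa [sub_eq_add_neg] using multipliable_one_add_of_summable (f := fun i => -(a * q ^ i))
    (by simpa using summable_norm_mul_pow a hq)

lemma tendsto_qPoch (a : ℂ) (hq : ‖q‖ < 1) :
    Tendsto (qPoch a q) atTop (𝓝 (∏' i : ℕ, (1 - a * q ^ i))) :=
  (multipliable_one_sub_mul_pow a hq).hasProd.tendsto_prod_nat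

lemma tprod_one_sub_mul_pow_ne_zero {a : ℂ} (ha : ‖a‖ < 1) (hq : ‖q‖ < 1) :
    ∏' i : ℕ, (1 - a * q ^ i) ≠ 0 := by
  simpa [sub_eq_add_neg] using tprod_one_add_ne_zero_of_summable (f := fun i => -(a * q ^ i))
    (fun i => by simpa [sub_eq_add_neg] using
      one_sub_ne_zero_of_norm_lt_one (norm_mul_pow_lt_one ha hq.le i))
    (by simpa using summable_norm_mul_pow a hq)

lemma qPoch_mul_tprod_mul_pow (a : ℂ) (hq : ‖q‖ < 1) (k : ℕ) :
    qPoch a q k * ∏' i : ℕ, (1 - a * q ^ k * q ^ i) = ∏' i : ℕ, (1 - a * q ^ i) := by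
  have hshift : ∀ i, 1 - a * q ^ k * q ^ i = 1 - a * q ^ (i + k) := fun i => by ring
  simp_rw [hshift]
  exact Multipliable.prod_mul_tprod_nat_mul' (f := fun i => 1 - a * q ^ i)
    ((multipliable_one_sub_mul_pow (a * q ^ k) hq).congr hshift)

lemma qPoch_ne_zero {a : ℂ} (ha : ‖a‖ < 1) (hq : ‖q‖ ≤ 1) (n : ℕ) : qPoch a q n ≠ 0 :=
  prod_ne_zero_iff.2 fun i _ => one_sub_ne_zero_of_norm_lt_one (norm_mul_pow_lt_one ha hq i)

lemma qPochN_ne_zero (hq : ‖q‖ < 1) (n : ℕ) : qPochN q n ≠ 0 :=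
  qPochN_eq_qPoch q n ▸ qPoch_ne_zero hq hq.le n

/-- The coefficients converge to `(a;q)_∞ / (q;q)_∞`, so they are bounded. -/
lemma exists_norm_qPoch_div_qPochN_le (a : ℂ) (hq : ‖q‖ < 1) :
    ∃ C, ∀ n, ‖qPoch a q n / qPochN q n‖ ≤ C := by
  have hlim : Tendsto (fun n => qPoch a q n / qPochN q n) atTop
      (𝓝 ((∏' i : ℕ, (1 - a * q ^ i)) / ∏' i : ℕ, (1 - q * q ^ i))) := by
    simp_rw [qPochN_eq_qPoch]
    exact (tendsto_qPoch a hq).div (tendsto_qPoch q hq) (tprod_one_sub_mul_pow_ne_zero hq hq)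
  obtain ⟨C, hC⟩ := isBounded_iff_forall_norm_le.1 (Metric.isBounded_range_of_tendsto _ hlim)
  exact ⟨C, fun n => hC _ ⟨n, rfl⟩⟩

lemma summable_norm_qPoch_div_qPochN_mul_pow (a : ℂ) (hq : ‖q‖ < 1) {x : ℂ} (hx : ‖x‖ < 1) :
    Summable fun n => ‖qPoch a q n / qPochN q n * x ^ n‖ := by
  obtain ⟨C, hC⟩ := exists_norm_qPoch_div_qPochN_le a hq
  refine .of_nonneg_of_le (fun n => norm_nonneg _) (fun n => ?_)
    ((summable_geometric_of_lt_one (norm_nonneg x) hx).mul_left C)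
  rw [norm_mul, norm_pow]
  exact mul_le_mul_of_nonneg_right (hC n) (by positivity)

lemma hasSum_qBinomialSeries (a : ℂ) (hq : ‖q‖ < 1) {x : ℂ} (hx : ‖x‖ < 1) :
    HasSum (fun n => qPoch a q n / qPochN q n * x ^ n) (qBinomialSeries a q x) :=
  (summable_norm_qPoch_div_qPochN_mul_pow a hq hx).of_norm.hasSum

lemma qPoch_div_qPochN_succ_mul (a : ℂ) (hq : ‖q‖ < 1) (n : ℕ) :
    qPoch a q (n + 1) / qPochN q (n + 1) * (1 - q ^ (n + 1)) =
      qPoch a q n / qPochN q n * (1 - a * q ^ n) := by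
  have hn := qPochN_ne_zero hq n
  have hsucc : 1 - q ^ (n + 1) ≠ 0 := by
    simpa [pow_succ'] using one_sub_ne_zero_of_norm_lt_one (norm_mul_pow_lt_one hq hq.le n)
  rw [qPoch_succ, qPochN, prod_range_succ, ← qPochN]
  field_simp

lemma qBinomialSeries_mul_one_sub (a : ℂ) (hq : ‖q‖ < 1) {x : ℂ} (hx : ‖x‖ < 1) :
    qBinomialSeries a q x * (1 - x) = qBinomialSeries a q (q * x) * (1 - a * x) := by
  set c := fun n => qPoch a q n / qPochN q n
  have hS := hasSum_qBinomialSeries a hq hx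
  have hSq := hasSum_qBinomialSeries a hq (x := q * x) (by
    simpa using norm_pow_mul_lt_one hq.le hx 1)
  have hdiff := hS.sub hSq
  have hshifted := (hS.mul_left x).sub (hSq.mul_left (a * x))
  have hrec : (fun n => c (n + 1) * x ^ (n + 1) - c (n + 1) * (q * x) ^ (n + 1)) =
      fun n => x * (c n * x ^ n) - a * x * (c n * (q * x) ^ n) := by
    ext n
    linear_combination x ^ (n + 1) * qPoch_div_qPochN_succ_mul a hq n
  rw [← hasSum_nat_add_iff' 1, hrec] at hdiff
  have hsums := hdiff.unique hshifted
  simp only [range_one, sum_singleton, pow_zero, mul_one, sub_self, sub_zero] at hsums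
  linear_combination hsums

lemma qBinomialSeries_mul_qPoch (a : ℂ) (hq : ‖q‖ < 1) {x : ℂ} (hx : ‖x‖ < 1) (N : ℕ) :
    qBinomialSeries a q x * qPoch x q N =
      qBinomialSeries a q (q ^ N * x) * qPoch (a * x) q N := by
  induction N with
  | zero => simp [qPoch]
  | succ N ih =>
    have hstep := qBinomialSeries_mul_one_sub a hq (norm_pow_mul_lt_one hq.le hx N)
    rw [qPoch_succ, qPoch_succ, ← mul_assoc, ih, pow_succ', mul_assoc q]
    linear_combination qPoch (a * x) q N * hstep

lemma tendsto_qBinomialSeries_pow_mul (a : ℂ) (hq : ‖q‖ < 1) {x : ℂ} (hx : ‖x‖ < 1) :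
    Tendsto (fun N => qBinomialSeries a q (q ^ N * x)) atTop (𝓝 1) := by
  have hterm : ∀ n, Tendsto (fun N => qPoch a q n / qPochN q n * (q ^ N * x) ^ n) atTop
      (𝓝 (qPoch a q n / qPochN q n * (0 * x) ^ n)) := fun n =>
    (((tendsto_pow_atTop_nhds_zero_of_norm_lt_one hq).mul_const x).pow n).const_mul _
  have hbound : ∀ N n, ‖qPoch a q n / qPochN q n * (q ^ N * x) ^ n‖ ≤
      ‖qPoch a q n / qPochN q n * x ^ n‖ := fun N n => by
    simp only [norm_mul, norm_pow]
    gcongr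
    exact mul_le_of_le_one_left (norm_nonneg x) (pow_le_one₀ (norm_nonneg q) hq.le)
  have hlim := tendsto_tsum_of_dominated_convergence
    (summable_norm_qPoch_div_qPochN_mul_pow a hq hx) hterm (.of_forall hbound)
  have hconst : ∑' n, qPoch a q n / qPochN q n * (0 * x) ^ n = 1 := by
    rw [tsum_eq_single 0 fun n hn => by simp [hn]]
    simp [qPoch, qPochN]
  rwa [hconst] at hlim

theorem qBinomialSeries_eq (a : ℂ) (hq : ‖q‖ < 1) {x : ℂ} (hx : ‖x‖ < 1) :
    qBinomialSeries a q x = (∏' i : ℕ, (1 - a * x * q ^ i)) / ∏' i : ℕ, (1 - x * q ^ i) := by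
  rw [eq_div_iff (tprod_one_sub_mul_pow_ne_zero hx hq)]
  have hleft := (tendsto_qPoch x hq).const_mul (qBinomialSeries a q x)
  have hright := (tendsto_qBinomialSeries_pow_mul a hq hx).mul (tendsto_qPoch (a * x) hq)
  rw [one_mul] at hright
  exact tendsto_nhds_unique (hleft.congr (qBinomialSeries_mul_qPoch a hq hx)) hright

/-- Euler's identity `∑ w^s / (q;q)_s = 1 / (w;q)_∞` at `w = q^r z`, where
`(q^r z;q)_∞ = (z;q)_∞ / (z;q)_r`. -/
lemma tsum_pow_mul_pow_div_qPochN (hq : ‖q‖ < 1) {z : ℂ} (hz : ‖z‖ < 1) (r : ℕ) :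
    ∑' s, (q ^ r * z) ^ s / qPochN q s = qPoch z q r / ∏' i : ℕ, (1 - z * q ^ i) := by
  have heuler := qBinomialSeries_eq 0 hq (norm_pow_mul_lt_one hq.le hz r)
  simp only [qBinomialSeries, qPoch_zero_left, zero_mul, sub_zero, tprod_one] at heuler
  rw [← qPoch_mul_tprod_mul_pow z hq r, div_mul_cancel_left₀ (qPoch_ne_zero hz hq.le r)]
  simp_rw [mul_comm z (q ^ r)]
  simpa only [one_div, div_eq_inv_mul, mul_one] using heuler

lemma summable_double_series (hq : ‖q‖ < 1) {x y : ℂ} (hx : ‖x‖ < 1) (hy : ‖y‖ < 1) :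
    Summable fun rs : ℕ × ℕ =>
      q ^ (rs.1 * rs.2) * x ^ rs.1 * y ^ rs.2 / (qPochN q rs.1 * qPochN q rs.2) := by
  have hgeom (z : ℂ) (hz : ‖z‖ < 1) : Summable fun n => ‖z ^ n / qPochN q n‖ := by
    simpa [qPoch_zero_left, div_eq_inv_mul] using
      summable_norm_qPoch_div_qPochN_mul_pow 0 hq hz
  refine .of_norm_bounded ((hgeom x hx).mul_norm (hgeom y hy)) fun ⟨r, s⟩ => ?_
  have hqrs : ‖q ^ (r * s)‖ ≤ 1 := by
    rw [norm_pow]; exact pow_le_one₀ (norm_nonneg q) hq.le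
  calc ‖q ^ (r * s) * x ^ r * y ^ s / (qPochN q r * qPochN q s)‖
      = ‖q ^ (r * s)‖ * ‖x ^ r / qPochN q r * (y ^ s / qPochN q s)‖ := by
        rw [← norm_mul]; ring_nf
    _ ≤ ‖x ^ r / qPochN q r * (y ^ s / qPochN q s)‖ := mul_le_of_le_one_left (norm_nonneg _) hqrs

/-- For `|q| < 1`, `|x| < 1`, `|y| < 1`:
`(xy;q)_∞ / ((x;q)_∞ (y;q)_∞) = ∑_{r,s ≥ 0} q^{rs} x^r y^s / ((q;q)_r (q;q)_s)`. -/
theorem qpoch_double_sum (q x y : ℂ) (hq : ‖q‖ < 1) (hx : ‖x‖ < 1) (hy : ‖y‖ < 1) :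
    (∏' i : ℕ, (1 - x * y * q ^ i)) /
        ((∏' i : ℕ, (1 - x * q ^ i)) * (∏' i : ℕ, (1 - y * q ^ i))) =
      ∑' rs : ℕ × ℕ,
        q ^ (rs.1 * rs.2) * x ^ rs.1 * y ^ rs.2 / (qPochN q rs.1 * qPochN q rs.2) := by
  calc (∏' i : ℕ, (1 - x * y * q ^ i)) /
        ((∏' i : ℕ, (1 - x * q ^ i)) * (∏' i : ℕ, (1 - y * q ^ i)))
      = qBinomialSeries y q x / ∏' i : ℕ, (1 - y * q ^ i) := by
        rw [qBinomialSeries_eq y hq hx, div_div, mul_comm y x]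
    _ = ∑' r, x ^ r / qPochN q r * (qPoch y q r / ∏' i : ℕ, (1 - y * q ^ i)) := by
        rw [qBinomialSeries, ← tsum_div_const]
        exact tsum_congr fun r => by ring
    _ = ∑' r, ∑' s, q ^ (r * s) * x ^ r * y ^ s / (qPochN q r * qPochN q s) := by
        refine tsum_congr fun r => ?_
        rw [← tsum_pow_mul_pow_div_qPochN hq hy r, ← tsum_mul_left]
        exact tsum_congr fun s => by rw [mul_pow, ← pow_mul]; ring
    _ = _ := (summable_double_series hq hx hy).tsum_prod.symm
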